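/- Let n ≥ 3. A smooth vector field V : ℝⁿ → ℝⁿ is a conformal Killing vector if and only if there exist a vector a ∈ ℝⁿ, a skew-symmetric n×n real matrix M, a scalar λ ∈ ℝ, and a vector r ∈ ℝⁿ such that V(x) = a + M x + λ x + ⟨r, x⟩ x − (‖x‖²/2) r for all x ∈ ℝⁿ. In particular every conformal Killing vector on ℝⁿ has polynomial components of degree at most 2. -/

import Mathlib

/-- Partial derivative in the `a`-th coordinate direction. -/
noncomputable def pd {n : ℕ} (a : Fin n) (f : (Fin n → ℝ) → ℝ) : (Fin n → ℝ) → ℝ :=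
  fun x => fderiv ℝ f x (Pi.single a (1 : ℝ))

/-- The divergence `div V = Σ_a ∂_a V^a`. -/
noncomputable def divg {n : ℕ} (V : (Fin n → ℝ) → (Fin n → ℝ)) : (Fin n → ℝ) → ℝ :=
  fun x => ∑ a, pd a (fun y => V y a) x

/-- A conformal Killing vector on ℝⁿ. -/
def IsCKV (n : ℕ) (V : (Fin n → ℝ) → (Fin n → ℝ)) : Prop :=
  ContDiff ℝ (⊤ : ℕ∞) V ∧ ∀ (a b : Fin n) (x : Fin n → ℝ),
    pd a (fun y => V y b) x + pd b (fun y => V y a) x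
      = 2 / (n : ℝ) * divg V x * (if a = b then (1 : ℝ) else 0)

variable {n : ℕ}

lemma clm_apply_eq_sum (L : (Fin n → ℝ) →L[ℝ] ℝ) (v : Fin n → ℝ) :
    L v = ∑ a, v a * L (Pi.single a 1) := by
  have h : v = ∑ a, v a • (Pi.single a 1 : Fin n → ℝ) := by
    funext i
    simp [Pi.single_apply, Finset.sum_ite_eq']
  conv_lhs => rw [h]
  rw [map_sum]
  simp [smul_eq_mul]

lemma clm_eq_zero_of_pd (L : (Fin n → ℝ) →L[ℝ] ℝ) (h : ∀ a, L (Pi.single a 1) = 0) :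
    L = 0 := by
  ext v
  rw [ContinuousLinearMap.zero_apply, clm_apply_eq_sum]
  simp [h]

lemma pd_smooth {f : (Fin n → ℝ) → ℝ} (hf : ContDiff ℝ (⊤ : ℕ∞) f) (a : Fin n) :
    ContDiff ℝ (⊤ : ℕ∞) (pd a f) :=
  (hf.fderiv_right (by norm_num)).clm_apply contDiff_const

lemma pd_hasFDerivAt {f : (Fin n → ℝ) → ℝ} {L : (Fin n → ℝ) →L[ℝ] ℝ} {x : Fin n → ℝ}
    (h : HasFDerivAt f L x) (a : Fin n) : pd a f x = L (Pi.single a 1) := by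
  rw [pd, h.fderiv]

lemma pd_sub {f g : (Fin n → ℝ) → ℝ} (hf : Differentiable ℝ f) (hg : Differentiable ℝ g)
    (a : Fin n) (x : Fin n → ℝ) :
    pd a (fun y => f y - g y) x = pd a f x - pd a g x := by
  simp [pd, fderiv_fun_sub (hf x) (hg x)]

lemma pd_comm {f : (Fin n → ℝ) → ℝ} (hf : ContDiff ℝ (⊤ : ℕ∞) f) (a b : Fin n) (x : Fin n → ℝ) :
    pd a (pd b f) x = pd b (pd a f) x := by
  have hdf : ContDiff ℝ (⊤ : ℕ∞) (fderiv ℝ f) := hf.fderiv_right (by norm_num)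
  have key : ∀ (c d : Fin n),
      pd c (pd d f) x = fderiv ℝ (fderiv ℝ f) x (Pi.single c 1) (Pi.single d 1) := by
    intro c d
    have : pd d f = fun y => fderiv ℝ f y (Pi.single d 1) := rfl
    rw [pd, this, fderiv_clm_apply (hdf.differentiable (by simp) x) (differentiableAt_const _)]
    simp
  rw [key a b, key b a]
  exact (hf.contDiffAt.isSymmSndFDerivAt (by rw [minSmoothness_of_isRCLikeNormedField]; exact WithTop.coe_le_coe.mpr (le_top : (2:ℕ∞) ≤ ⊤))) _ _

lemma pd_poly (aV : Fin n → ℝ) (M : Matrix (Fin n) (Fin n) ℝ) (lam : ℝ) (r : Fin n → ℝ)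
    (b d : Fin n) (x : Fin n → ℝ) :
    pd d (fun y => aV b + (∑ c, M b c * y c) + lam * y b
        + (∑ c, r c * y c) * y b - (∑ c, y c * y c) / 2 * r b) x
    = M b d + lam * (if b = d then 1 else 0) + (r d * x b
        + (∑ c, r c * x c) * (if b = d then 1 else 0)) - x d * r b := by
  have hproj : ∀ c : Fin n, HasFDerivAt (fun y : Fin n → ℝ => y c)
      (ContinuousLinearMap.proj c : (Fin n → ℝ) →L[ℝ] ℝ) x := by
    intro c; exact hasFDerivAt_apply c x
  have h1 : HasFDerivAt (fun y : Fin n → ℝ => ∑ c, M b c * y c)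
      (∑ c, M b c • (ContinuousLinearMap.proj c : (Fin n → ℝ) →L[ℝ] ℝ)) x := by
    apply HasFDerivAt.fun_sum; intro c _; exact (hproj c).const_mul (M b c)
  have h2 : HasFDerivAt (fun y : Fin n → ℝ => lam * y b)
      (lam • (ContinuousLinearMap.proj b : (Fin n → ℝ) →L[ℝ] ℝ)) x := (hproj b).const_mul lam
  have hr : HasFDerivAt (fun y : Fin n → ℝ => ∑ c, r c * y c)
      (∑ c, r c • (ContinuousLinearMap.proj c : (Fin n → ℝ) →L[ℝ] ℝ)) x := by
    apply HasFDerivAt.fun_sum; intro c _; exact (hproj c).const_mul (r c)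
  have h3 := hr.mul (hproj b)
  have hS : HasFDerivAt (fun y : Fin n → ℝ => ∑ c, y c * y c)
      (∑ c, ((x c) • (ContinuousLinearMap.proj c : (Fin n → ℝ) →L[ℝ] ℝ)
        + (x c) • (ContinuousLinearMap.proj c))) x := by
    apply HasFDerivAt.fun_sum; intro c _
    have := (hproj c).fun_mul (hproj c)
    convert this using 1
  have hq := hS.mul_const ((2:ℝ)⁻¹ * r b)
  have heq : (fun y : Fin n → ℝ => (∑ c, y c * y c) / 2 * r b)
      = (fun y : Fin n → ℝ => (∑ c, y c * y c) * ((2:ℝ)⁻¹ * r b)) := by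
    funext y; ring
  have hq' : HasFDerivAt (fun y : Fin n → ℝ => (∑ c, y c * y c) / 2 * r b)
      (((2:ℝ)⁻¹ * r b) • ∑ c, ((x c) • (ContinuousLinearMap.proj c : (Fin n → ℝ) →L[ℝ] ℝ)
        + (x c) • (ContinuousLinearMap.proj c))) x := by rw [heq]; exact hq
  have H := (((hasFDerivAt_const (aV b) x).add h1).add h2).add h3 |>.sub hq'
  rw [pd_hasFDerivAt (f := fun y : Fin n → ℝ => aV b + (∑ c, M b c * y c) + lam * y b
      + (∑ c, r c * y c) * y b - (∑ c, y c * y c) / 2 * r b) H]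
  simp [ContinuousLinearMap.proj_apply, Pi.single_apply, Finset.sum_ite_eq',
    Finset.sum_ite_eq, Finset.sum_add_distrib, mul_ite, ite_mul, eq_comm]
  ring

lemma poly_comp_smooth (aV : Fin n → ℝ) (M : Matrix (Fin n) (Fin n) ℝ) (lam : ℝ)
    (r : Fin n → ℝ) (b : Fin n) :
    ContDiff ℝ (⊤ : ℕ∞) (fun x : Fin n → ℝ => aV b + (∑ c, M b c * x c) + lam * x b
      + (∑ c, r c * x c) * x b - (∑ c, x c * x c) / 2 * r b) := by
  have cc : ∀ c : Fin n, ContDiff ℝ (⊤ : ℕ∞) (fun x : Fin n → ℝ => x c) := fun c =>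
    (ContinuousLinearMap.proj c : (Fin n → ℝ) →L[ℝ] ℝ).contDiff
  have h1 : ContDiff ℝ (⊤ : ℕ∞) (fun x : Fin n → ℝ => ∑ c, M b c * x c) :=
    ContDiff.sum fun c _ => contDiff_const.mul (cc c)
  have h2 : ContDiff ℝ (⊤ : ℕ∞) (fun x : Fin n → ℝ => ∑ c, r c * x c) :=
    ContDiff.sum fun c _ => contDiff_const.mul (cc c)
  have h3 : ContDiff ℝ (⊤ : ℕ∞) (fun x : Fin n → ℝ => ∑ c, x c * x c) :=
    ContDiff.sum fun c _ => (cc c).mul (cc c)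
  exact ((((contDiff_const.add h1).add (contDiff_const.mul (cc b))).add
    (h2.mul (cc b))).sub ((h3.div_const 2).mul contDiff_const))

lemma pd_add {f g : (Fin n → ℝ) → ℝ} (hf : Differentiable ℝ f) (hg : Differentiable ℝ g)
    (a : Fin n) (x : Fin n → ℝ) :
    pd a (fun y => f y + g y) x = pd a f x + pd a g x := by
  simp [pd, fderiv_fun_add (hf x) (hg x)]

lemma pd_mul_const {f : (Fin n → ℝ) → ℝ} (hf : Differentiable ℝ f) (k : ℝ)
    (a : Fin n) (x : Fin n → ℝ) :
    pd a (fun y => f y * k) x = pd a f x * k := by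
  simp [pd, fderiv_mul_const (hf x) k]
  ring

lemma const_of_pd_zero {f : (Fin n → ℝ) → ℝ} (hf : Differentiable ℝ f)
    (h : ∀ a x, pd a f x = 0) (x : Fin n → ℝ) : f x = f 0 := by
  apply is_const_of_fderiv_eq_zero hf
  intro y; exact clm_eq_zero_of_pd _ (fun a => h a y)

lemma affine_of_pd_const {f : (Fin n → ℝ) → ℝ} (hf : Differentiable ℝ f) (coef : Fin n → ℝ)
    (h : ∀ d x, pd d f x = coef d) (x : Fin n → ℝ) :
    f x = f 0 + ∑ a, x a * coef a := by
  set L : (Fin n → ℝ) →L[ℝ] ℝ := ∑ a, coef a • (ContinuousLinearMap.proj a) with hL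
  have hLx : ∀ v, L v = ∑ a, v a * coef a := by
    intro v; rw [hL]; simp [mul_comm]
  have hfd : ∀ y, fderiv ℝ f y = L := by
    intro y
    have hz : fderiv ℝ f y - L = 0 := by
      apply clm_eq_zero_of_pd
      intro a
      have h1 : fderiv ℝ f y (Pi.single a 1) = coef a := h a y
      have h2 : L (Pi.single a 1) = coef a := by
        rw [hLx]; simp [Pi.single_apply, Finset.sum_ite_eq', ite_mul]
      simp [ContinuousLinearMap.sub_apply, h1, h2]
    exact sub_eq_zero.mp hz
  have hg : Differentiable ℝ (fun y => f y - L y) := hf.sub L.differentiable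
  have hzz : ∀ y, fderiv ℝ (fun y => f y - L y) y = 0 := by
    intro y
    rw [fderiv_fun_sub (hf y) (L.differentiableAt), hfd y, L.fderiv]
    simp
  have hc := is_const_of_fderiv_eq_zero hg hzz x 0
  have h0 : L 0 = 0 := map_zero L
  have hx := hLx x
  linarith [hc, h0, hx]

lemma exists_third (hn : 3 ≤ n) (d b : Fin n) : ∃ a : Fin n, a ≠ d ∧ a ≠ b := by
  have hcard : ({d, b} : Finset (Fin n)).card < (Finset.univ : Finset (Fin n)).card := by
    have h1 : ({d, b} : Finset (Fin n)).card ≤ 2 := Finset.card_insert_le _ _ |>.trans (by simp)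
    have h2 : (Finset.univ : Finset (Fin n)).card = n := by simp
    omega
  have hne : ({d, b} : Finset (Fin n)) ≠ Finset.univ := by
    intro h; rw [h] at hcard; exact lt_irrefl _ hcard
  obtain ⟨a, -, ha⟩ := Finset.exists_of_ssubset (Finset.ssubset_univ_iff.mpr hne)
  exact ⟨a, by simpa using (fun h => ha (by simp [h])), fun h => ha (by simp [h])⟩


section Main
lemma backward (n : ℕ) (hn : 3 ≤ n) (V : (Fin n → ℝ) → (Fin n → ℝ))
    (a : Fin n → ℝ) (M : Matrix (Fin n) (Fin n) ℝ) (lam : ℝ) (r : Fin n → ℝ)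
    (hM : M.transpose = -M)
    (h : ∀ (x : Fin n → ℝ) (b : Fin n),
      V x b = a b + (∑ c, M b c * x c) + lam * x b
        + (∑ c, r c * x c) * x b - (∑ c, x c * x c) / 2 * r b) :
    IsCKV n V := by
  have hMskew : ∀ b c, M c b = - M b c := fun b c => congrFun (congrFun hM b) c
  have hMdiag : ∀ b, M b b = 0 := by
    intro b; have := hMskew b b; linarith
  have hcomp : ∀ b : Fin n, (fun y => V y b) = (fun y => a b + (∑ c, M b c * y c) + lam * y b
      + (∑ c, r c * y c) * y b - (∑ c, y c * y c) / 2 * r b) := by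
    intro b; funext y; exact h y b
  have hpd : ∀ (d b : Fin n) (x : Fin n → ℝ), pd d (fun y => V y b) x
      = M b d + lam * (if b = d then 1 else 0) + (r d * x b
        + (∑ c, r c * x c) * (if b = d then 1 else 0)) - x d * r b := by
    intro d b x; rw [hcomp b]; exact pd_poly a M lam r b d x
  have hdiv : ∀ x, divg V x = n * lam + n * (∑ c, r c * x c) := by
    intro x
    have he : divg V x = ∑ _a : Fin n, (lam + ∑ c, r c * x c) := by
      unfold divg
      apply Finset.sum_congr rfl
      intro a _
      rw [hpd]
      simp only [eq_self_iff_true, if_true, hMdiag]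
      ring
    rw [he, Finset.sum_const, Finset.card_univ]
    simp [nsmul_eq_mul, mul_add]
  constructor
  · have : V = fun x b => a b + (∑ c, M b c * x c) + lam * x b
        + (∑ c, r c * x c) * x b - (∑ c, x c * x c) / 2 * r b := by
      funext x b; exact h x b
    rw [this]
    exact contDiff_pi.2 fun b => poly_comp_smooth a M lam r b
  · intro p q x
    rw [hpd, hpd, hdiv]
    have hn0 : (n : ℝ) ≠ 0 := by positivity
    rcases eq_or_ne p q with rfl | hpq
    · simp only [eq_self_iff_true, if_true, hMdiag]
      field_simp
      ring
    · simp only [if_neg hpq, if_neg (Ne.symm hpq)]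
      rw [hMskew p q]
      ring

lemma forward (n : ℕ) (hn : 3 ≤ n) (V : (Fin n → ℝ) → (Fin n → ℝ)) (hV : IsCKV n V) :
    ∃ (a : Fin n → ℝ) (M : Matrix (Fin n) (Fin n) ℝ) (lam : ℝ) (r : Fin n → ℝ),
      M.transpose = -M ∧
      ∀ (x : Fin n → ℝ) (b : Fin n),
        V x b = a b + (∑ c, M b c * x c) + lam * x b
          + (∑ c, r c * x c) * x b - (∑ c, x c * x c) / 2 * r b := by
  obtain ⟨hs, hE⟩ := hV
  have hcomp : ∀ b, ContDiff ℝ (⊤ : ℕ∞) (fun y => V y b) := fun b => (contDiff_pi.mp hs) b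
  set σ : (Fin n → ℝ) → ℝ := fun x => 2 / (n : ℝ) * divg V x with hσdef
  have hσs : ContDiff ℝ (⊤ : ℕ∞) σ := by
    have hdv : ContDiff ℝ (⊤ : ℕ∞) (divg V) := by
      have : divg V = fun x => ∑ a, pd a (fun y => V y a) x := rfl
      rw [this]
      exact ContDiff.sum fun a _ => pd_smooth (hcomp a) a
    exact contDiff_const.mul hdv
  have hE' : ∀ (a b : Fin n) (x : Fin n → ℝ),
      pd a (fun y => V y b) x + pd b (fun y => V y a) x
        = σ x * (if a = b then (1:ℝ) else 0) := fun a b x => hE a b x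
  -- first derivatives of the conformal equation
  have step1 : ∀ (c a b : Fin n) (x : Fin n → ℝ),
      pd c (pd a (fun y => V y b)) x + pd c (pd b (fun y => V y a)) x
        = pd c σ x * (if a = b then (1:ℝ) else 0) := by
    intro c a b x
    have hfun : (fun y => pd a (fun z => V z b) y + pd b (fun z => V z a) y)
        = (fun y => σ y * (if a = b then (1:ℝ) else 0)) := funext (hE' a b)
    have hda := (pd_smooth (hcomp b) a).differentiable (by simp)
    have hdb := (pd_smooth (hcomp a) b).differentiable (by simp)
    calc pd c (pd a (fun y => V y b)) x + pd c (pd b (fun y => V y a)) x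
        = pd c (fun y => pd a (fun z => V z b) y + pd b (fun z => V z a) y) x :=
          (pd_add hda hdb c x).symm
      _ = pd c (fun y => σ y * (if a = b then (1:ℝ) else 0)) x := by rw [hfun]
      _ = pd c σ x * (if a = b then (1:ℝ) else 0) :=
          pd_mul_const (hσs.differentiable (by simp)) _ c x
  -- Hessian-of-V formula
  have step2 : ∀ (a b c : Fin n) (x : Fin n → ℝ),
      pd a (pd b (fun y => V y c)) x
        = (pd a σ x * (if b = c then (1:ℝ) else 0)
          + pd b σ x * (if a = c then (1:ℝ) else 0)
          - pd c σ x * (if a = b then (1:ℝ) else 0)) * (1/2) := by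
    intro a b c x
    have e1 := step1 a b c x
    have e2 := step1 b a c x
    have e3 := step1 c a b x
    have s1 := pd_comm (hcomp b) a c x
    have s2 := pd_comm (hcomp a) b c x
    have s3 := pd_comm (hcomp c) b a x
    linarith [e1, e2, e3, s1, s2, s3]
  -- third derivatives of V in terms of the Hessian of σ
  have hσd : ∀ a : Fin n, Differentiable ℝ (pd a σ) :=
    fun a => (pd_smooth hσs a).differentiable (by simp)
  have step3 : ∀ (d a b c : Fin n) (x : Fin n → ℝ),
      pd d (pd a (pd b (fun y => V y c))) x
        = (pd d (pd a σ) x * (if b = c then (1:ℝ) else 0)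
          + pd d (pd b σ) x * (if a = c then (1:ℝ) else 0)
          - pd d (pd c σ) x * (if a = b then (1:ℝ) else 0)) * (1/2) := by
    intro d a b c x
    have hfun : pd a (pd b (fun y => V y c))
        = (fun y => (pd a σ y * (if b = c then (1:ℝ) else 0)
          + pd b σ y * (if a = c then (1:ℝ) else 0)
          - pd c σ y * (if a = b then (1:ℝ) else 0)) * (1/2)) := funext (step2 a b c)
    rw [hfun]
    have d1 : Differentiable ℝ (fun y => pd a σ y * (if b = c then (1:ℝ) else 0)) :=
      (hσd a).mul_const _
    have d2 : Differentiable ℝ (fun y => pd b σ y * (if a = c then (1:ℝ) else 0)) :=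
      (hσd b).mul_const _
    have d3 : Differentiable ℝ (fun y => pd c σ y * (if a = b then (1:ℝ) else 0)) :=
      (hσd c).mul_const _
    rw [pd_mul_const (((d1.fun_add d2).fun_sub d3)) (1/2) d x,
      pd_sub (d1.fun_add d2) d3 d x, pd_add d1 d2 d x,
      pd_mul_const (hσd a) _ d x, pd_mul_const (hσd b) _ d x, pd_mul_const (hσd c) _ d x]
  -- the Hessian of σ vanishes
  have hsymH : ∀ (d a : Fin n) (x : Fin n → ℝ), pd d (pd a σ) x = pd a (pd d σ) x :=
    fun d a x => pd_comm hσs d a x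
  have key : ∀ (d a b c : Fin n) (x : Fin n → ℝ),
      pd d (pd b σ) x * (if a = c then (1:ℝ) else 0)
        - pd d (pd c σ) x * (if a = b then (1:ℝ) else 0)
      = pd a (pd b σ) x * (if d = c then (1:ℝ) else 0)
        - pd a (pd c σ) x * (if d = b then (1:ℝ) else 0) := by
    intro d a b c x
    have h1 := step3 d a b c x
    have h2 := step3 a d b c x
    have h3 := pd_comm (pd_smooth (hcomp c) b) d a x
    have h4 := hsymH d a x
    rw [← h4] at h2
    linarith [h1, h2, h3]
  have hdiag : ∀ (a d : Fin n) (x : Fin n → ℝ), a ≠ d →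
      pd d (pd d σ) x = - pd a (pd a σ) x := by
    intro a d x had
    have := key d a d a x
    simp only [if_pos rfl, if_true, eq_self_iff_true, if_neg had, if_neg (Ne.symm had),
      mul_one, mul_zero, sub_zero, zero_sub] at this
    linarith [this]
  have hdiag0 : ∀ (a : Fin n) (x : Fin n → ℝ), pd a (pd a σ) x = 0 := by
    intro a x
    obtain ⟨d, hda, -⟩ := exists_third hn a a
    obtain ⟨e, hea, hed⟩ := exists_third hn a d
    have h1 := hdiag a d x (Ne.symm hda)
    have h2 := hdiag e d x hed
    have h3 := hdiag e a x hea
    linarith [h1, h2, h3]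
  have hH0 : ∀ (d b : Fin n) (x : Fin n → ℝ), pd d (pd b σ) x = 0 := by
    intro d b x
    obtain ⟨a, had, hab⟩ := exists_third hn d b
    by_cases hdb : d = b
    · subst hdb
      exact hdiag0 d x
    · have := key d a b a x
      simp only [if_pos rfl, if_true, eq_self_iff_true, if_neg had, if_neg hab,
        if_neg (Ne.symm had), if_neg (Ne.symm hab), if_neg hdb,
        mul_one, mul_zero, sub_zero, zero_sub] at this
      linarith [this]
  -- the gradient of σ is constant
  have hgconst : ∀ (a : Fin n) (x : Fin n → ℝ), pd a σ x = pd a σ 0 :=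
    fun a x => const_of_pd_zero (hσd a) (fun d y => hH0 d a y) x
  set g : Fin n → ℝ := fun a => pd a σ 0 with hg
  -- first derivatives of V are affine
  have step7 : ∀ (d e : Fin n) (x : Fin n → ℝ),
      pd d (fun y => V y e) x = pd d (fun y => V y e) 0
        + ∑ a, x a * ((g a * (if d = e then (1:ℝ) else 0)
          + g d * (if a = e then (1:ℝ) else 0)
          - g e * (if a = d then (1:ℝ) else 0)) * (1/2)) := by
    intro d e x
    apply affine_of_pd_const ((pd_smooth (hcomp e) d).differentiable (by simp))
    intro a y
    rw [step2 a d e y, hgconst a y, hgconst d y, hgconst e y]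
  set lam : ℝ := σ 0 / 2 with hlam
  set M : Matrix (Fin n) (Fin n) ℝ :=
    fun b c => pd c (fun y => V y b) 0 - (if b = c then lam else 0) with hM
  set r : Fin n → ℝ := fun a => g a / 2 with hr
  have hMval : ∀ b c, M b c = pd c (fun y => V y b) 0 - (if b = c then lam else 0) :=
    fun b c => rfl
  have hMskew : ∀ b c, M c b = - M b c := by
    intro b c
    have h := hE' c b 0
    rw [hMval, hMval]
    rcases eq_or_ne b c with rfl | hbc
    · simp only [if_pos rfl, if_true, eq_self_iff_true, mul_one] at h ⊢
      rw [hlam]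
      linarith [h]
    · simp only [if_neg hbc, if_neg (Ne.symm hbc), mul_zero] at h ⊢
      linarith [h]
  have hMt : M.transpose = -M := by
    ext b c
    rw [Matrix.transpose_apply, Matrix.neg_apply]
    exact hMskew b c
  refine ⟨V 0, M, lam, r, hMt, ?_⟩
  intro x b
  set Pb : (Fin n → ℝ) → ℝ := fun y => V 0 b + (∑ c, M b c * y c) + lam * y b
    + (∑ c, r c * y c) * y b - (∑ c, y c * y c) / 2 * r b with hPbdef
  have hPs : ContDiff ℝ (⊤ : ℕ∞) Pb := by rw [hPbdef]; exact poly_comp_smooth (V 0) M lam r b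
  have hPd : ∀ (c : Fin n) (x' : Fin n → ℝ), pd c Pb x'
      = M b c + lam * (if b = c then 1 else 0) + (r c * x' b
        + (∑ c', r c' * x' c') * (if b = c then 1 else 0)) - x' c * r b := by
    intro c x'; rw [hPbdef]; exact pd_poly (V 0) M lam r b c x'
  have hzero : ∀ (c : Fin n) (x' : Fin n → ℝ), pd c (fun y => V y b - Pb y) x' = 0 := by
    intro c x'
    rw [pd_sub ((hcomp b).differentiable (by simp)) (hPs.differentiable (by simp)) c x',
      step7 c b x', hPd c x']
    have hM0 : pd c (fun y => V y b) 0 = M b c + (if b = c then lam else 0) := by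
      rw [hMval]; ring
    rw [hM0]
    rcases eq_or_ne c b with rfl | hcb
    · simp only [if_pos rfl, if_true, eq_self_iff_true]
      have hq : ∀ a : Fin n, x' a * ((g a * 1 + g c * (if a = c then (1:ℝ) else 0)
          - g c * (if a = c then (1:ℝ) else 0)) * (1/2)) = x' a * g a * (1/2) := by
        intro a; ring
      rw [Finset.sum_congr rfl (fun a _ => hq a)]
      have hq2 : ∀ c' : Fin n, r c' * x' c' = x' c' * g c' * (1/2) := by
        intro c'; simp only [hr]; ring
      rw [Finset.sum_congr rfl (fun c' _ => hq2 c')]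
      simp only [hr]
      ring
    · simp only [if_neg hcb, if_neg (Ne.symm hcb)]
      have hq : ∀ a : Fin n, x' a * ((g a * 0 + g c * (if a = b then (1:ℝ) else 0)
          - g b * (if a = c then (1:ℝ) else 0)) * (1/2))
          = (if a = b then x' a * g c * (1/2) else 0)
            - (if a = c then x' a * g b * (1/2) else 0) := by
        intro a
        by_cases h1 : a = b <;> by_cases h2 : a = c <;>
          simp [h1, h2, hcb, Ne.symm hcb] <;> ring
      rw [Finset.sum_congr rfl (fun a _ => hq a), Finset.sum_sub_distrib,
        Finset.sum_ite_eq', Finset.sum_ite_eq']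
      simp only [Finset.mem_univ, if_true, hr]
      ring
  have hfz : ∀ x' : Fin n → ℝ, fderiv ℝ (fun y => V y b - Pb y) x' = 0 :=
    fun x' => clm_eq_zero_of_pd _ (fun c => hzero c x')
  have hdiffD : Differentiable ℝ (fun y => V y b - Pb y) :=
    ((hcomp b).differentiable (by simp)).sub (hPs.differentiable (by simp))
  have hconst := is_const_of_fderiv_eq_zero hdiffD hfz x 0
  have hP0 : Pb 0 = V 0 b := by
    rw [hPbdef]; simp
  have hVx : V x b = Pb x := by
    linarith [hconst, hP0]
  rw [hVx, hPbdef]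

end Main

/-- A smooth vector field `V` on ℝⁿ (n ≥ 3) is a conformal Killing vector iff
`V(x) = a + M x + λ x + ⟨r, x⟩ x − (‖x‖²/2) r` for some vector `a`, skew matrix `M`,
scalar `λ` and vector `r`. In particular its components are polynomials of degree ≤ 2. -/
theorem stmt_6 (n : ℕ) (hn : 3 ≤ n) (V : (Fin n → ℝ) → (Fin n → ℝ)) :
    IsCKV n V ↔
      ∃ (a : Fin n → ℝ) (M : Matrix (Fin n) (Fin n) ℝ) (lam : ℝ) (r : Fin n → ℝ),
        M.transpose = -M ∧
        ∀ (x : Fin n → ℝ) (b : Fin n),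
          V x b = a b + (∑ c, M b c * x c) + lam * x b
            + (∑ c, r c * x c) * x b - (∑ c, x c * x c) / 2 * r b := by
  constructor
  · exact forward n hn V
  · rintro ⟨a, M, lam, r, hM, h⟩
    exact backward n hn V a M lam r hM h
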